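/- Let L be the canonical lifting of a free action of S_m on a set Y. Then L satisfies Condition (2): for every n ≥ 1 and every element ξ ∈ L n there exist a surjection q : Fin n → Fin m and y ∈ Y with ξ = L q [y, id] and Fix([y, id]) = 1. -/
import Mathlib


/-- The relation identifying `(y, q)` with `(σ • y, σ ∘ q)` for `σ ∈ S_m`, on pairs of an
element of `Y` and a surjection `Fin n → Fin m`. -/
def liftRel (m : ℕ) (Y : Type) [MulAction (Equiv.Perm (Fin m)) Y] (n : ℕ) :
    (Y × {q : Fin n → Fin m // Function.Surjective q}) →
    (Y × {q : Fin n → Fin m // Function.Surjective q}) → Prop :=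
  fun a b => ∃ σ : Equiv.Perm (Fin m), b.1 = σ • a.1 ∧ b.2.1 = ⇑σ ∘ a.2.1

/-- Level `n` of the canonical lifting of an action of `S_m` on `Y`: the quotient of
`{(y, q) : y ∈ Y, q : Fin n → Fin m surjective}` by `liftRel`. -/
def CanLifting (m : ℕ) (Y : Type) [MulAction (Equiv.Perm (Fin m)) Y] (n : ℕ) : Type :=
  Quot (liftRel m Y n)

/-- The class `[y, q]` in the canonical lifting. -/
def mkCl {m : ℕ} {Y : Type} [MulAction (Equiv.Perm (Fin m)) Y] {n : ℕ}
    (y : Y) (q : Fin n → Fin m) (hq : Function.Surjective q) : CanLifting m Y n :=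
  Quot.mk _ (y, ⟨q, hq⟩)

/-- Restriction of the canonical lifting along a surjection `f : Fin k → Fin n`:
`[y, q] ↦ [y, q ∘ f]`. -/
def CanLiftMap {m : ℕ} {Y : Type} [MulAction (Equiv.Perm (Fin m)) Y] {k n : ℕ}
    (f : Fin k → Fin n) (hf : Function.Surjective f) :
    CanLifting m Y n → CanLifting m Y k :=
  Quot.lift (fun a => Quot.mk _ (a.1, ⟨a.2.1 ∘ f, a.2.2.comp hf⟩))
    (fun a b hab => by
      obtain ⟨σ, h1, h2⟩ := hab
      refine Quot.sound ⟨σ, h1, ?_⟩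
      show b.2.1 ∘ f = ⇑σ ∘ (a.2.1 ∘ f)
      rw [h2]
      rfl)

/-- `Fix(ξ) = 1` for an element `ξ` of the canonical lifting: the identity is the only
permutation `τ` of `Fin n` with `L τ ξ = ξ`. -/
def FixT {m : ℕ} {Y : Type} [MulAction (Equiv.Perm (Fin m)) Y] {n : ℕ}
    (ξ : CanLifting m Y n) : Prop :=
  ∀ τ : Equiv.Perm (Fin n), CanLiftMap ⇑τ τ.surjective ξ = ξ → τ = 1

lemma liftRel_of_eqvGen {m : ℕ} {Y : Type} [MulAction (Equiv.Perm (Fin m)) Y] {n : ℕ}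
    {a b : Y × {q : Fin n → Fin m // Function.Surjective q}}
    (h : Relation.EqvGen (liftRel m Y n) a b) : liftRel m Y n a b := by
  induction h with
  | rel a b hab => exact hab
  | refl a => exact ⟨1, by simp, by ext i; rfl⟩
  | symm a b _ ih =>
      obtain ⟨σ, h1, h2⟩ := ih
      refine ⟨σ⁻¹, by rw [h1, inv_smul_smul], ?_⟩
      ext i
      simp [h2]
  | trans a b c _ _ ih1 ih2 =>
      obtain ⟨σ, h1, h2⟩ := ih1
      obtain ⟨τ, h3, h4⟩ := ih2
      refine ⟨τ * σ, by rw [h3, h1, mul_smul], ?_⟩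
      ext i
      simp [h4, h2]

/-- The canonical lifting `L` of a free action of `S_m` on `Y` satisfies
Condition (2): every `ξ ∈ L n` (`n ≥ 1`) is of the form `L q [y, id]` for some surjection
`q : Fin n → Fin m` and `y ∈ Y`, where `Fix([y, id]) = 1`. -/
theorem canLift_cond2 {m : ℕ} (Y : Type) [MulAction (Equiv.Perm (Fin m)) Y]
    (hfree : ∀ (σ : Equiv.Perm (Fin m)) (y : Y), σ • y = y → σ = 1)
    (n : ℕ) (hn : 1 ≤ n) (ξ : CanLifting m Y n) :
    ∃ (q : Fin n → Fin m) (hq : Function.Surjective q) (y : Y),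
      ξ = CanLiftMap q hq (mkCl y (id : Fin m → Fin m) Function.surjective_id) ∧
      FixT (mkCl y (id : Fin m → Fin m) Function.surjective_id) := by
  obtain ⟨⟨y, q, hq⟩⟩ := ξ
  refine ⟨q, hq, y, ?_, ?_⟩
  · exact Quot.sound ⟨1, by simp, by ext i; rfl⟩
  · intro τ hτ
    have h := liftRel_of_eqvGen (Quot.eq.mp hτ)
    obtain ⟨σ, h1, h2⟩ := h
    have hσ : σ = 1 := hfree σ y h1.symm
    have h2' : (id : Fin m → Fin m) = ⇑τ := by
      have := h2
      simp only [hσ] at this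
      simpa using this
    exact Equiv.ext fun i => (congrFun h2' i).symm
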